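/- arXiv:1903.05555 — 2 statements merged into one kernel-verified Lean document; each statement's English description precedes it below -/
import Mathlib

section
/- The total order on the power set of ℕ defined by I < J iff min((I \ J) ∪ (J \ I)) ∈ J is complete: every nonempty collection of subsets of ℕ has a supremum with respect to this order. -/
/-- The Gabriel–Roiter order on subsets of `ℕ`:
`I < J` iff `I ≠ J` and `min((I \ J) ∪ (J \ I)) ∈ J`. -/
def grLT (I J : Set ℕ) : Prop :=
  I ≠ J ∧ sInf ((I \ J) ∪ (J \ I)) ∈ J

/-- The reflexive closure `I ≤ J` of the Gabriel–Roiter order. -/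
def grLE (I J : Set ℕ) : Prop := I = J ∨ grLT I J

/-- Greedy construction of the supremum: `n` is in the sup iff some `I ∈ S`
contains `n` and agrees with the sup strictly below `n`. -/
def grAux (S : Set (Set ℕ)) : ℕ → Prop := fun n =>
  ∃ I, I ∈ S ∧ n ∈ I ∧ ∀ m, m < n → (m ∈ I ↔ grAux S m)
termination_by n => n

lemma symmdiff_nonempty {I J : Set ℕ} (h : I ≠ J) : ((I \ J) ∪ (J \ I)).Nonempty := by
  by_contra hc
  rw [Set.not_nonempty_iff_eq_empty] at hc
  apply h
  ext n
  have := Set.eq_empty_iff_forall_notMem.mp hc n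
  simp only [Set.mem_union, Set.mem_diff, not_or, not_and, not_not] at this
  constructor <;> intro hn
  · exact this.1 hn
  · exact this.2 hn

/-- The total order `≤` on `𝒫(ℕ)` given by `I ≤ J` iff `I = J` or
`min((I \ J) ∪ (J \ I)) ∈ J` is complete: every nonempty collection of subsets of `ℕ`
has a supremum (a least upper bound) with respect to this order. -/
theorem grLE_complete (S : Set (Set ℕ)) (hS : S.Nonempty) :
    ∃ M : Set ℕ, (∀ I ∈ S, grLE I M) ∧ ∀ B : Set ℕ, (∀ I ∈ S, grLE I B) → grLE M B := by
  set M : Set ℕ := {n | grAux S n} with hMdef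
  have hmemM : ∀ n, n ∈ M ↔ grAux S n := fun n => Iff.rfl
  refine ⟨M, ?_, ?_⟩
  · intro I hI
    by_cases hIM : I = M
    · exact Or.inl hIM
    · right
      refine ⟨hIM, ?_⟩
      have hne := symmdiff_nonempty hIM
      set d := sInf ((I \ M) ∪ (M \ I)) with hd
      have hdmem : d ∈ (I \ M) ∪ (M \ I) := Nat.sInf_mem hne
      have hagree : ∀ m, m < d → (m ∈ I ↔ m ∈ M) := by
        intro m hm
        by_contra h
        have hmem : m ∈ (I \ M) ∪ (M \ I) := by
          by_cases hmi : m ∈ I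
          · exact Or.inl ⟨hmi, fun hmM => h ⟨fun _ => hmM, fun _ => hmi⟩⟩
          · refine Or.inr ⟨?_, hmi⟩
            by_contra hmM
            exact h ⟨fun a => absurd a hmi, fun a => absurd a hmM⟩
        exact absurd (Nat.sInf_le hmem) (not_le.mpr hm)
      rcases hdmem with h | h
      · exfalso
        apply h.2
        rw [hmemM, grAux]
        exact ⟨I, hI, h.1, fun m hm => hagree m hm⟩
      · exact h.1
  · intro B hB
    by_cases hMB : M = B
    · exact Or.inl hMB
    · right
      refine ⟨hMB, ?_⟩
      have hne := symmdiff_nonempty hMB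
      set d := sInf ((M \ B) ∪ (B \ M)) with hd
      have hdmem : d ∈ (M \ B) ∪ (B \ M) := Nat.sInf_mem hne
      have hagree : ∀ m, m < d → (m ∈ M ↔ m ∈ B) := by
        intro m hm
        by_contra h
        have hmem : m ∈ (M \ B) ∪ (B \ M) := by
          by_cases hmi : m ∈ M
          · exact Or.inl ⟨hmi, fun hmB => h ⟨fun _ => hmB, fun _ => hmi⟩⟩
          · refine Or.inr ⟨?_, hmi⟩
            by_contra hmB
            exact h ⟨fun a => absurd a hmi, fun a => absurd a hmB⟩
        exact absurd (Nat.sInf_le hmem) (not_le.mpr hm)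
      rcases hdmem with h | h
      · exfalso
        -- d ∈ M \ B : get a witness I ∈ S with d ∈ I agreeing with M below d
        have hdM : grAux S d := (hmemM d).mp h.1
        rw [grAux] at hdM
        obtain ⟨I, hIS, hdI, hIagree⟩ := hdM
        have hIagree' : ∀ m, m < d → (m ∈ I ↔ m ∈ B) := by
          intro m hm
          exact (hIagree m hm).trans (hagree m hm)
        rcases hB I hIS with hIB | ⟨_, he⟩
        · exact h.2 (hIB ▸ hdI)
        · -- e := sInf (I Δ B) ∈ B; show e = d, contradicting d ∉ B
          set e := sInf ((I \ B) ∪ (B \ I)) with heq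
          have hdIB : d ∈ (I \ B) ∪ (B \ I) := Or.inl ⟨hdI, h.2⟩
          have hed : e ≤ d := Nat.sInf_le hdIB
          have : e = d := by
            rcases lt_or_eq_of_le hed with hlt | heqd
            · exfalso
              have hemem : e ∈ (I \ B) ∪ (B \ I) :=
                Nat.sInf_mem ⟨d, hdIB⟩
              have := hIagree' e hlt
              rcases hemem with h' | h'
              · exact h'.2 (this.mp h'.1)
              · exact h'.2 (this.mpr h'.1)
            · exact heqd
          exact h.2 (this ▸ he)
      · exact h.1
end

section
/- Let λ be a length function on an abelian length category 𝒜 and μ_λ the associated Gabriel–Roiter measure. If X is a subobject of Y, then μ_λ(X) ≤ μ_λ(Y). -/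
open CategoryTheory CategoryTheory.Limits ZeroObject

/-- The lexicographic Gabriel–Roiter order on finite subsets of `[0,∞)`
(here finite sets of reals): `I < J` iff `I ≠ J` and the minimum of the
symmetric difference `(I \ J) ∪ (J \ I)` belongs to `J`. -/
def grfLT (I J : Finset ℝ) : Prop :=
  I ≠ J ∧ sInf ((((I \ J) ∪ (J \ I)) : Finset ℝ) : Set ℝ) ∈ J

/-- The reflexive closure of the lexicographic Gabriel–Roiter order. -/
def grfLE (I J : Finset ℝ) : Prop := I = J ∨ grfLT I J

variable (C : Type) [Category C] [Abelian C]

/-- An object of an abelian category is indecomposable: nonzero, and any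
direct sum decomposition has a zero summand. -/
def IndecObj (X : C) : Prop :=
  ¬ IsZero X ∧ ∀ A B : C, Nonempty (X ≅ A ⊞ B) → IsZero A ∨ IsZero B

/-- The sets `{λ(Y₁), …, λ(Y_t)}` arising from chains `Y₁ ⊂ ⋯ ⊂ Y_t` of
indecomposable subobjects of `X`. -/
def grChainSetsC (lam : C → ℝ) (X : C) : Set (Finset ℝ) :=
  { I | ∃ (t : ℕ) (A : Fin t → Subobject X), StrictMono A ∧
      (∀ i, IndecObj C ((A i : C))) ∧
      I = Finset.image (fun i => lam ((A i : C))) Finset.univ }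

/-- `M` is the Gabriel–Roiter measure `μ_λ(X)` of `X` associated to the length
function `lam`: the maximum, in the lexicographic order on finite subsets of
`[0,∞)`, of the sets `{λ(Y₁), …, λ(Y_t)}` over chains of indecomposable
subobjects of `X`. -/
def IsGRMeasureC (lam : C → ℝ) (X : C) (M : Finset ℝ) : Prop :=
  M ∈ grChainSetsC C lam X ∧ ∀ I ∈ grChainSetsC C lam X, grfLE I M

lemma lam_iso_inv (lam : C → ℝ)
    (hzero : ∀ X : C, lam X = 0 ↔ IsZero X)
    (hadd : ∀ S : ShortComplex C, S.ShortExact → lam S.X₂ = lam S.X₁ + lam S.X₃)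
    {A B : C} (e : A ≅ B) : lam A = lam B := by
  let S : ShortComplex C := ShortComplex.mk e.hom (0 : B ⟶ (0 : C)) (by simp)
  have hepi : Epi (S.g) := ⟨fun h k _ => (isZero_zero C).eq_of_src h k⟩
  have hmono : Mono (S.f) := by dsimp [S]; infer_instance
  have hse : S.ShortExact := { exact := (S.exact_iff_epi rfl).2 (by dsimp [S]; infer_instance) }
  have := hadd S hse
  have h0 : lam (0 : C) = 0 := (hzero _).2 (isZero_zero C)
  dsimp [S] at this
  rw [this, h0]; ring

lemma map_obj_mk {X Y A : C} (f : X ⟶ Y) [Mono f] (g : A ⟶ X) [Mono g] :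
    (Subobject.map f).obj (Subobject.mk g) = Subobject.mk (g ≫ f) :=
  Quotient.sound' ⟨MonoOver.isoMk (Iso.refl _) (by simp)⟩

noncomputable def mapUnderlyingIso {X Y : C} (f : X ⟶ Y) [Mono f] (P : Subobject X) :
    (((Subobject.map f).obj P : C)) ≅ (P : C) := by
  have h : (Subobject.map f).obj P = Subobject.mk (P.arrow ≫ f) := by
    conv_lhs => rw [← Subobject.mk_arrow P]
    exact map_obj_mk C f P.arrow
  exact Subobject.isoOfEq _ _ h ≪≫ Subobject.underlyingIso (P.arrow ≫ f)

lemma map_strictMono {X Y : C} (f : X ⟶ Y) [Mono f] :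
    StrictMono ((Subobject.map f).obj) := by
  have hinj : Function.Injective ((Subobject.map f).obj) := fun P Q h => by
    have := congrArg ((Subobject.pullback f).obj) h
    rwa [Subobject.pullback_map_self, Subobject.pullback_map_self] at this
  have hmono : Monotone ((Subobject.map f).obj) := fun P Q h => by
    rw [← Subobject.mk_arrow P, ← Subobject.mk_arrow Q, map_obj_mk, map_obj_mk]
    exact Subobject.mk_le_mk_of_comm (Subobject.ofLE P Q h) (by simp)
  exact hmono.strictMono_of_injective hinj

lemma indec_iso {P Q : C} (e : P ≅ Q) (h : IndecObj C P) : IndecObj C Q := by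
  obtain ⟨h1, h2⟩ := h
  refine ⟨fun hz => h1 (hz.of_iso e), fun A B ⟨i⟩ => h2 A B ⟨e ≪≫ i⟩⟩


/-- Let `lam` be a length function on an abelian length category `C` and `μ_λ`
the associated Gabriel–Roiter measure.  If `X` is a subobject of `Y`, then
`μ_λ(X) ≤ μ_λ(Y)`. -/
theorem grMeasureC_mono_of_subobject
    (hacc : ∀ X : C, WellFoundedGT (Subobject X))
    (hdcc : ∀ X : C, WellFoundedLT (Subobject X))
    (lam : C → ℝ)
    (hnonneg : ∀ X : C, 0 ≤ lam X)
    (hzero : ∀ X : C, lam X = 0 ↔ IsZero X)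
    (hadd : ∀ S : ShortComplex C, S.ShortExact → lam S.X₂ = lam S.X₁ + lam S.X₃)
    (Y : C) (X : Subobject Y) (MX MY : Finset ℝ)
    (hX : IsGRMeasureC C lam (X : C) MX) (hY : IsGRMeasureC C lam Y MY) :
    grfLE MX MY := by
  apply hY.2
  obtain ⟨t, A, hsm, hind, hI⟩ := hX.1
  refine ⟨t, fun i => (Subobject.map X.arrow).obj (A i),
    (map_strictMono C X.arrow).comp hsm, fun i =>
      indec_iso C (mapUnderlyingIso C X.arrow (A i)).symm (hind i), ?_⟩
  rw [hI]
  congr 1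
  funext i
  exact lam_iso_inv C lam hzero hadd (mapUnderlyingIso C X.arrow (A i)).symm
end
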